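/- If m is even, then N M^{-1} N = 0, where N is the m×m matrix with (0,0)-entry 1 and all other entries 0. -/

import Mathlib

open Matrix

/-- α_j = 1/(8j²−2). -/
noncomputable def alph (j : ℕ) : ℝ := 1 / (8 * (j : ℝ) ^ 2 - 2)

/-- The m×m tridiagonal matrix M with M₀₀ = 1/2, M_{j-1,j} = −α_j, M_{j,j-1} = α_j. -/
noncomputable def Mmat (m : ℕ) : Matrix (Fin m) (Fin m) ℝ :=
  Matrix.of fun i j =>
    if (i : ℕ) = 0 ∧ (j : ℕ) = 0 then 1 / 2
    else if (i : ℕ) + 1 = (j : ℕ) then - alph (j : ℕ)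
    else if (j : ℕ) + 1 = (i : ℕ) then alph (i : ℕ)
    else 0

/-- The m×m matrix N = e₀ e₀ᵀ. -/
noncomputable def Nmat (m : ℕ) : Matrix (Fin m) (Fin m) ℝ :=
  Matrix.of fun i j => if (i : ℕ) = 0 ∧ (j : ℕ) = 0 then 1 else 0

/-- The vector v: v_j = 2(2j+1) for even j (0 else) when m is odd;
    v_j = −2(2j+1) for odd j (0 else) when m is even. -/
noncomputable def vVec (m : ℕ) : Fin m → ℝ := fun j =>
  if Odd m then (if Even (j : ℕ) then 2 * (2 * (j : ℝ) + 1) else 0)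
  else (if Odd (j : ℕ) then -2 * (2 * (j : ℝ) + 1) else 0)

/-- The standard basis vector e₀. -/
noncomputable def e0vec (m : ℕ) : Fin m → ℝ := fun i => if (i : ℕ) = 0 then 1 else 0

/-
The vector `v = vVec m`, supported on the odd indices, solves `M v = e₀`: the rows of `M` with odd
index only see the even entries of `v`, the row `0` gives `-α₁ v₁ = 1`, and an even row `i ≥ 2`
gives `α_i v_{i-1} - α_{i+1} v_{i+1} = 0` because `8j² - 2 = 2(2j-1)(2j+1)`. Evenness of `m` makes
`i + 1` a valid index for every even row `i`. Hence `(M⁻¹)₀₀ = v₀ = 0` when `M` is invertible, and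
`M⁻¹ = 0` otherwise.
-/

theorem Matrix.inv_apply_self_eq_zero_of_mulVec_eq_single {n R : Type*} [Fintype n]
    [DecidableEq n] [CommRing R] {A : Matrix n n R} {v : n → R} {i : n}
    (h : A *ᵥ v = Pi.single i 1) (hv : v i = 0) : A⁻¹ i i = 0 := by
  by_cases hA : IsUnit A.det
  · have hinv : A⁻¹ *ᵥ Pi.single i 1 = v := by
      rw [← h, mulVec_mulVec, nonsing_inv_mul _ hA, one_mulVec]
    rw [mulVec_single_one] at hinv
    exact (congrFun hinv i).trans hv
  · simp [nonsing_inv_apply_not_isUnit _ hA]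

lemma alph_succ (n : ℕ) : alph (n + 1) = 1 / (2 * (2 * n + 1) * (2 * n + 3)) := by
  rw [alph]
  push_cast
  ring

lemma alph_succ_mul_left (n : ℕ) : alph (n + 1) * (2 * (2 * n + 1)) = 1 / (2 * n + 3) := by
  rw [alph_succ]
  field_simp

lemma alph_succ_mul_right (n : ℕ) : alph (n + 1) * (2 * (2 * n + 3)) = 1 / (2 * n + 1) := by
  rw [alph_succ]
  field_simp

section

variable {m : ℕ}

lemma vVec_of_even (heven : Even m) (j : Fin m) :
    vVec m j = if Odd (j : ℕ) then -2 * (2 * (j : ℝ) + 1) else 0 := by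
  simp [vVec, Nat.not_odd_iff_even.mpr heven]

lemma vVec_eq_zero_of_even (heven : Even m) {j : Fin m} (hj : Even (j : ℕ)) : vVec m j = 0 := by
  simp [vVec_of_even heven, Nat.not_odd_iff_even.mpr hj]

lemma Mmat_apply_of_odd {i j : Fin m} (hj : Odd (j : ℕ)) :
    Mmat m i j = if (i : ℕ) + 1 = j then -alph j else if (j : ℕ) + 1 = i then alph i else 0 := by
  simp [Mmat, hj.pos.ne']

lemma Mmat_mul_vVec_eq_zero (heven : Even m) {i j : Fin m}
    (hadj : Odd (j : ℕ) → (i : ℕ) + 1 ≠ j ∧ (j : ℕ) + 1 ≠ i) : Mmat m i j * vVec m j = 0 := by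
  rcases Nat.even_or_odd (j : ℕ) with hj | hj
  · rw [vVec_eq_zero_of_even heven hj, mul_zero]
  · rw [Mmat_apply_of_odd hj, if_neg (hadj hj).1, if_neg (hadj hj).2, zero_mul]

lemma Mmat_mulVec_vVec_apply_of_odd (heven : Even m) {i : Fin m} (hi : Odd (i : ℕ)) :
    (Mmat m *ᵥ vVec m) i = 0 := by
  rw [mulVec, dotProduct]
  exact Finset.sum_eq_zero fun j _ => Mmat_mul_vVec_eq_zero heven fun hj => by
    obtain ⟨a, ha⟩ := hi
    obtain ⟨b, hb⟩ := hj
    constructor <;> omega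

lemma Mmat_mulVec_vVec_apply_zero (heven : Even m) {i : Fin m} (hi : (i : ℕ) = 0) :
    (Mmat m *ᵥ vVec m) i = 1 := by
  have h1 : 1 < m := by
    obtain ⟨k, hk⟩ := heven
    have := i.isLt
    omega
  rw [mulVec, dotProduct, Fintype.sum_eq_single ⟨1, h1⟩ fun j hj =>
    Mmat_mul_vVec_eq_zero heven fun _ => by
      have hj1 : (j : ℕ) ≠ 1 := fun h => hj (Fin.ext h)
      constructor <;> omega]
  rw [Mmat_apply_of_odd odd_one, if_pos (by simp [hi]), vVec_of_even heven, if_pos odd_one]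
  have h := alph_succ_mul_right 0
  norm_num at h ⊢
  linarith

lemma Mmat_mulVec_vVec_apply_of_even (heven : Even m) {i : Fin m} (hi : Even (i : ℕ))
    (hi0 : (i : ℕ) ≠ 0) : (Mmat m *ᵥ vVec m) i = 0 := by
  obtain ⟨n, hn⟩ : ∃ n, (i : ℕ) = n + 1 := ⟨i - 1, by omega⟩
  have hn_odd : Odd n := by obtain ⟨k, hk⟩ := hi; exact ⟨k - 1, by omega⟩
  have hlt : n + 2 < m := by
    obtain ⟨k, hk⟩ := heven
    obtain ⟨l, hl⟩ := hi
    have := i.isLt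
    omega
  rw [mulVec, dotProduct, Fintype.sum_eq_add (⟨n, by omega⟩ : Fin m) ⟨n + 2, hlt⟩
    (Fin.ne_of_val_ne (by simp)) fun j hj => Mmat_mul_vVec_eq_zero heven fun _ => by
      have h1 : (j : ℕ) ≠ n := fun h => hj.1 (Fin.ext h)
      have h2 : (j : ℕ) ≠ n + 2 := fun h => hj.2 (Fin.ext h)
      constructor <;> omega]
  rw [Mmat_apply_of_odd hn_odd, Mmat_apply_of_odd (hn_odd.add_even even_two),
    vVec_of_even heven, vVec_of_even heven, if_pos hn_odd, if_pos (hn_odd.add_even even_two)]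
  simp only [hn, if_neg (show n + 1 + 1 ≠ n by omega)]
  have h₁ := alph_succ_mul_left n
  have h₂ := alph_succ_mul_right (n + 1)
  push_cast at h₂ ⊢
  linear_combination h₂ - h₁

lemma Mmat_mulVec_vVec (heven : Even m) : Mmat m *ᵥ vVec m = e0vec m := by
  funext i
  rcases Nat.even_or_odd (i : ℕ) with hi | hi
  · by_cases hi0 : (i : ℕ) = 0
    · simp [Mmat_mulVec_vVec_apply_zero heven hi0, e0vec, hi0]
    · simp [Mmat_mulVec_vVec_apply_of_even heven hi hi0, e0vec, hi0]
  · simp [Mmat_mulVec_vVec_apply_of_odd heven hi, e0vec, hi.pos.ne']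

lemma e0vec_eq_single (hm : 0 < m) : e0vec m = Pi.single ⟨0, hm⟩ 1 := by
  funext j
  simp [e0vec, Pi.single_apply, Fin.ext_iff]

lemma Nmat_eq_single (hm : 0 < m) : Nmat m = single ⟨0, hm⟩ ⟨0, hm⟩ 1 := by
  ext i j
  simp [Nmat, single_apply, Fin.ext_iff, eq_comm]

end

/-- if m is even then N M⁻¹ N = 0. -/
theorem NMinvN_eq_zero_of_even (m : ℕ) (hm : 2 ≤ m) (heven : Even m) :
    Nmat m * (Mmat m)⁻¹ * Nmat m = 0 := by
  have hm₀ : 0 < m := by omega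
  have hinv : (Mmat m)⁻¹ ⟨0, hm₀⟩ ⟨0, hm₀⟩ = 0 :=
    inv_apply_self_eq_zero_of_mulVec_eq_single
      ((Mmat_mulVec_vVec heven).trans (e0vec_eq_single hm₀)) (vVec_eq_zero_of_even heven (by simp))
  rw [Nmat_eq_single hm₀, single_mul_mul_single, hinv]
  simp
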